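/- arXiv:2312.01929 — 2 statements merged into one kernel-verified Lean document; each statement's English description precedes it below -/
import Mathlib

section
/- Let T > 0, a < b, let ū_b, φ' : [0,T] → ℝ be continuous, and let u, u', u* : [0,T] × [a,b] → ℝ be C² functions such that: ∂ₜu' = ∂ₓ²u' and −∂ₜu* − ∂ₓ²u* = 0 on (0,T) × (a,b); u'(0,x) = 0 and u*(T,x) = 0 for x ∈ [a,b]; ∂ₓu'(t,a) = φ'(t), ∂ₓu'(t,b) = 0, ∂ₓu*(t,a) = 0 and ∂ₓu*(t,b) = u(t,b) − ū_b(t) for t ∈ [0,T]. Then ∫₀ᵀ (u(t,b) − ū_b(t)) u'(t,b) dt = − ∫₀ᵀ u*(t,a) φ'(t) dt. -/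
/-!
For solutions `u'` of the heat equation and `u*` of the backward heat equation, the Lagrange
identity `∂ₜ(u* u') + ∂ₓ(∂ₓu* u' − u* ∂ₓu') = u' (∂ₜu* + ∂ₓ²u*) + u* (∂ₜu' − ∂ₓ²u') = 0`
and the divergence theorem on `[0,T] × [a,b]` balance the flux through the sides `x = a, b`
against `∫ u* u' dx` at `t = 0, T`. The initial and terminal data make the latter vanish, and the
Neumann data turn the fluxes into `(u(·,b) − ū_b) u'(·,b)` and `−u*(·,a) φ'`.
-/

open MeasureTheory Set Function

section PartialDerivatives

variable {E : Type*} [NormedAddCommGroup E] [NormedSpace ℝ E] {f : ℝ → ℝ → E} {t x : ℝ}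

theorem HasFDerivAt.hasDerivAt_uncurry_left {L : ℝ × ℝ →L[ℝ] E}
    (h : HasFDerivAt (uncurry f) L (t, x)) : HasDerivAt (fun s => f s x) (L (1, 0)) t :=
  (h.comp_hasDerivAt t ((hasDerivAt_id' t).prodMk (hasDerivAt_const t x)) :)

theorem HasFDerivAt.hasDerivAt_uncurry_right {L : ℝ × ℝ →L[ℝ] E}
    (h : HasFDerivAt (uncurry f) L (t, x)) : HasDerivAt (f t) (L (0, 1)) x :=
  (h.comp_hasDerivAt x ((hasDerivAt_const x t).prodMk (hasDerivAt_id' x)) :)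

theorem DifferentiableAt.fderiv_uncurry_apply_one_zero
    (h : DifferentiableAt ℝ (uncurry f) (t, x)) :
    fderiv ℝ (uncurry f) (t, x) (1, 0) = deriv (fun s => f s x) t :=
  h.hasFDerivAt.hasDerivAt_uncurry_left.deriv.symm

theorem DifferentiableAt.fderiv_uncurry_apply_zero_one
    (h : DifferentiableAt ℝ (uncurry f) (t, x)) :
    fderiv ℝ (uncurry f) (t, x) (0, 1) = deriv (f t) x :=
  h.hasFDerivAt.hasDerivAt_uncurry_right.deriv.symm

theorem DifferentiableAt.differentiableAt_uncurry_left
    (h : DifferentiableAt ℝ (uncurry f) (t, x)) : DifferentiableAt ℝ (fun s => f s x) t :=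
  h.hasFDerivAt.hasDerivAt_uncurry_left.differentiableAt

theorem DifferentiableAt.differentiableAt_uncurry_right
    (h : DifferentiableAt ℝ (uncurry f) (t, x)) : DifferentiableAt ℝ (f t) x :=
  h.hasFDerivAt.hasDerivAt_uncurry_right.differentiableAt

theorem ContDiff.uncurry_deriv_right {n : WithTop ℕ∞} (hf : ContDiff ℝ (n + 1) (uncurry f)) :
    ContDiff ℝ n (uncurry fun t x => deriv (f t) x) := by
  have hd : Differentiable ℝ (uncurry f) := hf.differentiable (by simp)
  have h : (uncurry fun t x => deriv (f t) x) = fun p => fderiv ℝ (uncurry f) p (0, 1) := by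
    ext ⟨t, x⟩
    exact (hd (t, x)).fderiv_uncurry_apply_zero_one.symm
  rw [h]
  exact (hf.fderiv_right le_rfl).clm_apply contDiff_const

end PartialDerivatives

noncomputable def heatFlux (u v : ℝ → ℝ → ℝ) (t x : ℝ) : ℝ :=
  deriv (v t) x * u t x - v t x * deriv (u t) x

theorem ContDiff.uncurry_heatFlux {u v : ℝ → ℝ → ℝ} (hu : ContDiff ℝ 2 (uncurry u))
    (hv : ContDiff ℝ 2 (uncurry v)) : ContDiff ℝ 1 (uncurry (heatFlux u v)) :=
  (hv.uncurry_deriv_right.mul (hu.of_le one_le_two)).sub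
    ((hv.of_le one_le_two).mul hu.uncurry_deriv_right)

theorem fderiv_uncurry_mul_add_fderiv_uncurry_heatFlux {u v : ℝ → ℝ → ℝ}
    (hu : ContDiff ℝ 2 (uncurry u)) (hv : ContDiff ℝ 2 (uncurry v)) (t x : ℝ) :
    fderiv ℝ (uncurry fun t x => v t x * u t x) (t, x) (1, 0)
      + fderiv ℝ (uncurry (heatFlux u v)) (t, x) (0, 1)
      = u t x * (deriv (fun s => v s x) t + deriv (deriv (v t)) x)
        + v t x * (deriv (fun s => u s x) t - deriv (deriv (u t)) x) := by
  have hu1 : ContDiff ℝ 1 (uncurry u) := hu.of_le one_le_two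
  have hv1 : ContDiff ℝ 1 (uncurry v) := hv.of_le one_le_two
  have hu' := ContDiff.uncurry_deriv_right (n := 1) hu
  have hv' := ContDiff.uncurry_deriv_right (n := 1) hv
  have hP : ContDiff ℝ 1 (uncurry fun t x => v t x * u t x) := hv1.mul hu1
  have hQ := hu.uncurry_heatFlux hv
  have hdu := hu1.differentiable one_ne_zero (t, x)
  have hdv := hv1.differentiable one_ne_zero (t, x)
  have hdu' := (hu'.differentiable one_ne_zero (t, x)).differentiableAt_uncurry_right
  have hdv' := (hv'.differentiable one_ne_zero (t, x)).differentiableAt_uncurry_right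
  rw [(hP.differentiable one_ne_zero (t, x)).fderiv_uncurry_apply_one_zero,
    (hQ.differentiable one_ne_zero (t, x)).fderiv_uncurry_apply_zero_one]
  have ht : HasDerivAt (fun s => v s x * u s x)
      (deriv (fun s => v s x) t * u t x + v t x * deriv (fun s => u s x) t) t :=
    hdv.differentiableAt_uncurry_left.hasDerivAt.mul hdu.differentiableAt_uncurry_left.hasDerivAt
  have hx : HasDerivAt (heatFlux u v t)
      (deriv (deriv (v t)) x * u t x + deriv (v t) x * deriv (u t) x
        - (deriv (v t) x * deriv (u t) x + v t x * deriv (deriv (u t)) x)) x :=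
    (hdv'.hasDerivAt.mul hdu.differentiableAt_uncurry_right.hasDerivAt).sub
      (hdv.differentiableAt_uncurry_right.hasDerivAt.mul hdu'.hasDerivAt)
  rw [ht.deriv, hx.deriv]
  ring

theorem integral_heatFlux_sub_integral_heatFlux {u v : ℝ → ℝ → ℝ} {t₀ t₁ a b : ℝ}
    (ht : t₀ < t₁) (hab : a < b)
    (hu : ContDiff ℝ 2 (uncurry u)) (hv : ContDiff ℝ 2 (uncurry v))
    (hu_heat : ∀ t ∈ Ioo t₀ t₁, ∀ x ∈ Ioo a b,
      deriv (fun s => u s x) t = deriv (deriv (u t)) x)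
    (hv_heat : ∀ t ∈ Ioo t₀ t₁, ∀ x ∈ Ioo a b,
      deriv (fun s => v s x) t = -deriv (deriv (v t)) x) :
    (∫ t in t₀..t₁, heatFlux u v t b) - (∫ t in t₀..t₁, heatFlux u v t a)
      = (∫ x in a..b, v t₀ x * u t₀ x) - ∫ x in a..b, v t₁ x * u t₁ x := by
  set P : ℝ × ℝ → ℝ := uncurry fun t x => v t x * u t x
  set Q : ℝ × ℝ → ℝ := uncurry (heatFlux u v)
  have hP : ContDiff ℝ 1 P := (hv.of_le one_le_two).mul (hu.of_le one_le_two)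
  have hQ : ContDiff ℝ 1 Q := hu.uncurry_heatFlux hv
  have hdiv : EqOn (fun p => fderiv ℝ P p (1, 0) + fderiv ℝ Q p (0, 1)) 0
      (Icc t₀ t₁ ×ˢ Icc a b) := by
    have hcont : Continuous fun p => fderiv ℝ P p (1, 0) + fderiv ℝ Q p (0, 1) :=
      ((hP.continuous_fderiv one_ne_zero).clm_apply continuous_const).add
        ((hQ.continuous_fderiv one_ne_zero).clm_apply continuous_const)
    have hinterior : EqOn (fun p => fderiv ℝ P p (1, 0) + fderiv ℝ Q p (0, 1)) 0
        (Ioo t₀ t₁ ×ˢ Ioo a b) := by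
      rintro ⟨t, x⟩ ⟨ht, hx⟩
      simp only [P, Q, fderiv_uncurry_mul_add_fderiv_uncurry_heatFlux hu hv, hu_heat t ht x hx,
        hv_heat t ht x hx, Pi.zero_apply]
      ring
    simpa [closure_prod_eq, closure_Ioo ht.ne, closure_Ioo hab.ne] using
      hinterior.closure hcont continuous_const
  rw [← uIcc_of_le ht.le, ← uIcc_of_le hab.le] at hdiv
  have hgreen := integral2_divergence_prod_of_hasFDerivAt P Q (fderiv ℝ P) (fderiv ℝ Q) t₀ a t₁ b
    hP.continuous.continuousOn hQ.continuous.continuousOn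
    (fun p _ => (hP.differentiable one_ne_zero p).hasFDerivAt)
    (fun p _ => (hQ.differentiable one_ne_zero p).hasFDerivAt)
    (integrableOn_zero.congr_fun hdiv.symm (measurableSet_uIcc.prod measurableSet_uIcc))
  have hzero : (∫ t in t₀..t₁, ∫ x in a..b, fderiv ℝ P (t, x) (1, 0) + fderiv ℝ Q (t, x) (0, 1))
      = 0 := by
    refine (intervalIntegral.integral_congr (g := fun _ => 0) fun t ht => ?_).trans
      intervalIntegral.integral_zero
    exact (intervalIntegral.integral_congr (g := fun _ => 0) fun x hx =>
      hdiv (mk_mem_prod ht hx)).trans intervalIntegral.integral_zero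
  simp only [P, Q, uncurry_apply_pair] at hgreen
  linarith

theorem stmt4_general (T a b : ℝ) (hT : 0 < T) (hab : a < b)
    (ub φ' : ℝ → ℝ)
    (u u' ustar : ℝ → ℝ → ℝ)
    (hu' : ContDiff ℝ 2 (Function.uncurry u'))
    (hustar : ContDiff ℝ 2 (Function.uncurry ustar))
    (hpde : ∀ t ∈ Set.Ioo (0:ℝ) T, ∀ x ∈ Set.Ioo a b,
      deriv (fun s => u' s x) t = deriv (deriv (u' t)) x)
    (hadj : ∀ t ∈ Set.Ioo (0:ℝ) T, ∀ x ∈ Set.Ioo a b,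
      -(deriv (fun s => ustar s x) t) - deriv (deriv (ustar t)) x = 0)
    (hic : ∀ x ∈ Set.Icc a b, u' 0 x = 0)
    (htc : ∀ x ∈ Set.Icc a b, ustar T x = 0)
    (hbc1 : ∀ t ∈ Set.Icc (0:ℝ) T, deriv (u' t) a = φ' t)
    (hbc2 : ∀ t ∈ Set.Icc (0:ℝ) T, deriv (u' t) b = 0)
    (hbc3 : ∀ t ∈ Set.Icc (0:ℝ) T, deriv (ustar t) a = 0)
    (hbc4 : ∀ t ∈ Set.Icc (0:ℝ) T, deriv (ustar t) b = u t b - ub t) :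
    ∫ t in (0:ℝ)..T, (u t b - ub t) * u' t b
      = -∫ t in (0:ℝ)..T, ustar t a * φ' t := by
  have hgreen := integral_heatFlux_sub_integral_heatFlux hT hab hu' hustar hpde
    fun t ht x hx => by linarith [hadj t ht x hx]
  have hinitial : ∫ x in a..b, ustar 0 x * u' 0 x = 0 :=
    (intervalIntegral.integral_congr (g := fun _ => 0) fun x hx => by
      simp [hic x (uIcc_of_le hab.le ▸ hx)]).trans intervalIntegral.integral_zero
  have hterminal : ∫ x in a..b, ustar T x * u' T x = 0 :=
    (intervalIntegral.integral_congr (g := fun _ => 0) fun x hx => by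
      simp [htc x (uIcc_of_le hab.le ▸ hx)]).trans intervalIntegral.integral_zero
  have hflux_b : ∫ t in (0:ℝ)..T, heatFlux u' ustar t b
      = ∫ t in (0:ℝ)..T, (u t b - ub t) * u' t b :=
    intervalIntegral.integral_congr fun t ht => by
      simp [heatFlux, hbc4 t (uIcc_of_le hT.le ▸ ht), hbc2 t (uIcc_of_le hT.le ▸ ht)]
  have hflux_a : ∫ t in (0:ℝ)..T, heatFlux u' ustar t a
      = ∫ t in (0:ℝ)..T, -(ustar t a * φ' t) :=
    intervalIntegral.integral_congr fun t ht => by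
      simp [heatFlux, hbc3 t (uIcc_of_le hT.le ▸ ht), hbc1 t (uIcc_of_le hT.le ▸ ht)]
  rw [hflux_b, hflux_a, intervalIntegral.integral_neg, hinitial, hterminal] at hgreen
  linarith

/-- Adjoint-based expression for the Gâteaux differential of the boundary-tracking objective:
if `u'` solves the perturbation (linearized heat) system with boundary flux `φ'` at `x = a`
and `u*` solves the adjoint (backward heat) system with Neumann data `u(·,b) − ū_b` at
`x = b`, then `∫₀ᵀ (u(t,b) − ū_b(t)) u'(t,b) dt = −∫₀ᵀ u*(t,a) φ'(t) dt`, identifying the L²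
gradient of the objective as `−u*(·,a)`. -/
theorem stmt4 (T a b : ℝ) (hT : 0 < T) (hab : a < b)
    (ub φ' : ℝ → ℝ) (hub : Continuous ub) (hφ' : Continuous φ')
    (u u' ustar : ℝ → ℝ → ℝ)
    (hu : ContDiff ℝ 2 (Function.uncurry u))
    (hu' : ContDiff ℝ 2 (Function.uncurry u'))
    (hustar : ContDiff ℝ 2 (Function.uncurry ustar))
    (hpde : ∀ t ∈ Set.Ioo (0:ℝ) T, ∀ x ∈ Set.Ioo a b,
      deriv (fun s => u' s x) t = deriv (deriv (u' t)) x)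
    (hadj : ∀ t ∈ Set.Ioo (0:ℝ) T, ∀ x ∈ Set.Ioo a b,
      -(deriv (fun s => ustar s x) t) - deriv (deriv (ustar t)) x = 0)
    (hic : ∀ x ∈ Set.Icc a b, u' 0 x = 0)
    (htc : ∀ x ∈ Set.Icc a b, ustar T x = 0)
    (hbc1 : ∀ t ∈ Set.Icc (0:ℝ) T, deriv (u' t) a = φ' t)
    (hbc2 : ∀ t ∈ Set.Icc (0:ℝ) T, deriv (u' t) b = 0)
    (hbc3 : ∀ t ∈ Set.Icc (0:ℝ) T, deriv (ustar t) a = 0)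
    (hbc4 : ∀ t ∈ Set.Icc (0:ℝ) T, deriv (ustar t) b = u t b - ub t) :
    ∫ t in (0:ℝ)..T, (u t b - ub t) * u' t b
      = -∫ t in (0:ℝ)..T, ustar t a * φ' t :=
  stmt4_general T a b hT hab ub φ' u u' ustar hu' hustar hpde hadj hic htc hbc1 hbc2 hbc3 hbc4
end

section
/- Let T > 0, a < b, let φ' : [0,T] → ℝ be continuous, and let u, u', v* : [0,T] × [a,b] → ℝ be C² functions such that: ∂ₜu' = ∂ₓ²u' on (0,T) × (a,b) with ∂ₓu'(t,a) = φ'(t), ∂ₓu'(t,b) = 0, and u'(0,·) = 0; and −∂ₜv* − ∂ₓ²v* = u on (0,T) × (a,b) with ∂ₓv*(t,a) = 0, ∂ₓv*(t,b) = 0, and v*(T,·) = 0. Then ∫₀ᵀ ∫ₐᵇ u(t,x) u'(t,x) dx dt = − ∫₀ᵀ v*(t,a) φ'(t) dt. -/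
/-!
Multiply the adjoint equation by `u'` and split the integrand of `∫∫ u u'` as
`-(v*ₜ u' + v* u'ₓₓ) - (u' v*ₓₓ - v* u'ₓₓ)`. By the heat equation for `u'` the first bracket is
`∂ₜ(v* u')`, whose time integral vanishes since `u'(0, ·) = 0` and `v*(T, ·) = 0`. The second
bracket is `∂ₓ(u' v*ₓ - v* u'ₓ)`, whose space integral reduces by the Neumann conditions to
`v*(t, a) φ'(t)`.
-/

open MeasureTheory Set Function intervalIntegral

noncomputable def partialFst (f : ℝ → ℝ → ℝ) (t x : ℝ) : ℝ := deriv (fun s => f s x) t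

noncomputable def partialSnd (f : ℝ → ℝ → ℝ) (t x : ℝ) : ℝ := deriv (f t) x

section PartialDerivatives

variable {f : ℝ → ℝ → ℝ}

theorem hasDerivAt_fderiv_fst (hf : Differentiable ℝ (uncurry f)) (t x : ℝ) :
    HasDerivAt (fun s => f s x) (fderiv ℝ (uncurry f) (t, x) (1, 0)) t := by
  have hline : HasDerivAt (fun s => (s, x)) ((1 : ℝ), (0 : ℝ)) t :=
    (hasDerivAt_id t).prodMk (hasDerivAt_const t x)
  exact (hf (t, x)).hasFDerivAt.comp_hasDerivAt t hline

theorem hasDerivAt_fderiv_snd (hf : Differentiable ℝ (uncurry f)) (t x : ℝ) :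
    HasDerivAt (f t) (fderiv ℝ (uncurry f) (t, x) (0, 1)) x := by
  have hline : HasDerivAt (fun y => (t, y)) ((0 : ℝ), (1 : ℝ)) x :=
    (hasDerivAt_const x t).prodMk (hasDerivAt_id x)
  exact (hf (t, x)).hasFDerivAt.comp_hasDerivAt x hline

theorem hasDerivAt_partialFst (hf : Differentiable ℝ (uncurry f)) (t x : ℝ) :
    HasDerivAt (fun s => f s x) (partialFst f t x) t :=
  (hasDerivAt_fderiv_fst hf t x).differentiableAt.hasDerivAt

theorem hasDerivAt_partialSnd (hf : Differentiable ℝ (uncurry f)) (t x : ℝ) :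
    HasDerivAt (f t) (partialSnd f t x) x :=
  (hasDerivAt_fderiv_snd hf t x).differentiableAt.hasDerivAt

variable {m n : WithTop ℕ∞}

theorem contDiff_partialFst (hf : ContDiff ℝ m (uncurry f)) (hnm : n + 1 ≤ m) :
    ContDiff ℝ n (uncurry (partialFst f)) := by
  have hdiff : Differentiable ℝ (uncurry f) :=
    (hf.of_le (le_add_self.trans hnm)).differentiable one_ne_zero
  have h : uncurry (partialFst f) = fun p => fderiv ℝ (uncurry f) p (1, 0) := by
    ext ⟨t, x⟩
    exact (hasDerivAt_fderiv_fst hdiff t x).deriv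
  rw [h]
  exact (hf.fderiv_right hnm).clm_apply contDiff_const

theorem contDiff_partialSnd (hf : ContDiff ℝ m (uncurry f)) (hnm : n + 1 ≤ m) :
    ContDiff ℝ n (uncurry (partialSnd f)) := by
  have hdiff : Differentiable ℝ (uncurry f) :=
    (hf.of_le (le_add_self.trans hnm)).differentiable one_ne_zero
  have h : uncurry (partialSnd f) = fun p => fderiv ℝ (uncurry f) p (0, 1) := by
    ext ⟨t, x⟩
    exact (hasDerivAt_fderiv_snd hdiff t x).deriv
  rw [h]
  exact (hf.fderiv_right hnm).clm_apply contDiff_const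

theorem continuous_partialFst (hf : ContDiff ℝ 1 (uncurry f)) :
    Continuous (uncurry (partialFst f)) :=
  (contDiff_partialFst (n := 0) hf (by norm_num)).continuous

theorem continuous_partialSnd_partialSnd (hf : ContDiff ℝ 2 (uncurry f)) :
    Continuous (uncurry (partialSnd (partialSnd f))) :=
  (contDiff_partialSnd (n := 0) (contDiff_partialSnd hf le_rfl) le_rfl).continuous

end PartialDerivatives

theorem integral_green_second_identity {a b : ℝ} {f f' f'' g g' g'' : ℝ → ℝ}
    (hf : ∀ x ∈ uIcc a b, HasDerivAt f (f' x) x) (hf' : ∀ x ∈ uIcc a b, HasDerivAt f' (f'' x) x)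
    (hg : ∀ x ∈ uIcc a b, HasDerivAt g (g' x) x) (hg' : ∀ x ∈ uIcc a b, HasDerivAt g' (g'' x) x)
    (hint : IntervalIntegrable (fun x => f x * g'' x - g x * f'' x) volume a b) :
    ∫ x in a..b, (f x * g'' x - g x * f'' x)
      = (f b * g' b - g b * f' b) - (f a * g' a - g a * f' a) :=
  integral_eq_sub_of_hasDerivAt (fun x hx =>
    (((hf x hx).mul (hg' x hx)).sub ((hg x hx).mul (hf' x hx))).congr_deriv (by ring)) hint

theorem intervalIntegral_intervalIntegral_add_of_continuous {a₁ b₁ a₂ b₂ : ℝ} {F G : ℝ → ℝ → ℝ}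
    (hF : Continuous (uncurry F)) (hG : Continuous (uncurry G)) :
    ∫ t in a₁..b₁, ∫ x in a₂..b₂, (F t x + G t x)
      = (∫ t in a₁..b₁, ∫ x in a₂..b₂, F t x) + ∫ t in a₁..b₁, ∫ x in a₂..b₂, G t x := by
  have hsplit (t : ℝ) : ∫ x in a₂..b₂, (F t x + G t x)
      = (∫ x in a₂..b₂, F t x) + ∫ x in a₂..b₂, G t x :=
    integral_add ((hF.uncurry_left t).intervalIntegrable _ _)
      ((hG.uncurry_left t).intervalIntegrable _ _)
  simp_rw [hsplit]
  exact integral_add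
    ((continuous_parametric_intervalIntegral_of_continuous' hF _ _).intervalIntegrable _ _)
    ((continuous_parametric_intervalIntegral_of_continuous' hG _ _).intervalIntegrable _ _)

theorem intervalIntegral_intervalIntegral_swap_of_continuous {a₁ b₁ a₂ b₂ : ℝ}
    {F : ℝ → ℝ → ℝ} (hF : Continuous (uncurry F)) :
    ∫ t in a₁..b₁, ∫ x in a₂..b₂, F t x = ∫ x in a₂..b₂, ∫ t in a₁..b₁, F t x :=
  intervalIntegral_intervalIntegral_swap <|
    (hF.continuousOn.integrableOn_compact (isCompact_uIcc.prod isCompact_uIcc)).mono_set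
      (prod_mono uIoc_subset_uIcc uIoc_subset_uIcc)

theorem integral_integral_partialFst_mul_add_mul_partialFst {t₀ t₁ a b : ℝ} {f g : ℝ → ℝ → ℝ}
    (hf : ContDiff ℝ 1 (uncurry f)) (hg : ContDiff ℝ 1 (uncurry g)) :
    ∫ t in t₀..t₁, ∫ x in a..b, (partialFst f t x * g t x + f t x * partialFst g t x)
      = ∫ x in a..b, (f t₁ x * g t₁ x - f t₀ x * g t₀ x) := by
  have hfₜ := continuous_partialFst hf
  have hgₜ := continuous_partialFst hg
  have hint : Continuous (uncurry fun t x => partialFst f t x * g t x + f t x * partialFst g t x) :=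
    (hfₜ.mul hg.continuous).add (hf.continuous.mul hgₜ)
  rw [intervalIntegral_intervalIntegral_swap_of_continuous hint]
  exact integral_congr fun x _ => integral_deriv_mul_eq_sub
    (fun t _ => hasDerivAt_partialFst (hf.differentiable one_ne_zero) t x)
    (fun t _ => hasDerivAt_partialFst (hg.differentiable one_ne_zero) t x)
    ((hfₜ.uncurry_right x).intervalIntegrable _ _) ((hgₜ.uncurry_right x).intervalIntegrable _ _)

theorem integral_mul_partialSnd_partialSnd_sub {a b : ℝ} {f g : ℝ → ℝ → ℝ}
    (hf : ContDiff ℝ 2 (uncurry f)) (hg : ContDiff ℝ 2 (uncurry g)) (t : ℝ) :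
    ∫ x in a..b, (f t x * partialSnd (partialSnd g) t x - g t x * partialSnd (partialSnd f) t x)
      = (f t b * partialSnd g t b - g t b * partialSnd f t b)
        - (f t a * partialSnd g t a - g t a * partialSnd f t a) := by
  have hfₓ : Differentiable ℝ (uncurry (partialSnd f)) :=
    (contDiff_partialSnd hf le_rfl).differentiable one_ne_zero
  have hgₓ : Differentiable ℝ (uncurry (partialSnd g)) :=
    (contDiff_partialSnd hg le_rfl).differentiable one_ne_zero
  have hint : Continuous (uncurry fun t x =>
      f t x * partialSnd (partialSnd g) t x - g t x * partialSnd (partialSnd f) t x) :=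
    (hf.continuous.mul (continuous_partialSnd_partialSnd hg)).sub
      (hg.continuous.mul (continuous_partialSnd_partialSnd hf))
  exact integral_green_second_identity
    (fun x _ => hasDerivAt_partialSnd (hf.differentiable two_ne_zero) t x)
    (fun x _ => hasDerivAt_partialSnd hfₓ t x)
    (fun x _ => hasDerivAt_partialSnd (hg.differentiable two_ne_zero) t x)
    (fun x _ => hasDerivAt_partialSnd hgₓ t x) ((hint.uncurry_left t).intervalIntegrable _ _)

theorem stmt5_general (T a b : ℝ) (hT : 0 < T) (hab : a < b)
    (φ' : ℝ → ℝ)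
    (u u' vstar : ℝ → ℝ → ℝ)
    (hu' : ContDiff ℝ 2 (Function.uncurry u'))
    (hvstar : ContDiff ℝ 2 (Function.uncurry vstar))
    (hpde : ∀ t ∈ Set.Ioo (0:ℝ) T, ∀ x ∈ Set.Ioo a b,
      deriv (fun s => u' s x) t = deriv (deriv (u' t)) x)
    (hbc1 : ∀ t ∈ Set.Icc (0:ℝ) T, deriv (u' t) a = φ' t)
    (hbc2 : ∀ t ∈ Set.Icc (0:ℝ) T, deriv (u' t) b = 0)
    (hic : ∀ x ∈ Set.Icc a b, u' 0 x = 0)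
    (hadj : ∀ t ∈ Set.Ioo (0:ℝ) T, ∀ x ∈ Set.Ioo a b,
      -(deriv (fun s => vstar s x) t) - deriv (deriv (vstar t)) x = u t x)
    (hbc3 : ∀ t ∈ Set.Icc (0:ℝ) T, deriv (vstar t) a = 0)
    (hbc4 : ∀ t ∈ Set.Icc (0:ℝ) T, deriv (vstar t) b = 0)
    (htc : ∀ x ∈ Set.Icc a b, vstar T x = 0) :
    ∫ t in (0:ℝ)..T, ∫ x in a..b, u t x * u' t x
      = -∫ t in (0:ℝ)..T, vstar t a * φ' t := by
  have hX : Continuous (uncurry fun t x =>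
      partialFst vstar t x * u' t x + vstar t x * partialSnd (partialSnd u') t x) :=
    ((continuous_partialFst (hvstar.of_le one_le_two)).mul hu'.continuous).add
      (hvstar.continuous.mul (continuous_partialSnd_partialSnd hu'))
  have hY : Continuous (uncurry fun t x =>
      u' t x * partialSnd (partialSnd vstar) t x - vstar t x * partialSnd (partialSnd u') t x) :=
    (hu'.continuous.mul (continuous_partialSnd_partialSnd hvstar)).sub
      (hvstar.continuous.mul (continuous_partialSnd_partialSnd hu'))
  have htime : ∫ t in (0:ℝ)..T, ∫ x in a..b,
      (partialFst vstar t x * u' t x + vstar t x * partialSnd (partialSnd u') t x) = 0 := by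
    calc _ = ∫ t in (0:ℝ)..T, ∫ x in a..b,
          (partialFst vstar t x * u' t x + vstar t x * partialFst u' t x) :=
          integral_congr_Ioo_of_le hT.le fun t ht => integral_congr_Ioo_of_le hab.le fun x hx =>
            congrArg (_ + vstar t x * ·) (hpde t ht x hx).symm
      _ = ∫ x in a..b, (vstar T x * u' T x - vstar 0 x * u' 0 x) :=
          integral_integral_partialFst_mul_add_mul_partialFst (hvstar.of_le one_le_two)
            (hu'.of_le one_le_two)
      _ = 0 := (integral_congr fun x hx => ?_).trans integral_zero
    rw [uIcc_of_le hab.le] at hx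
    simp [htc x hx, hic x hx]
  have hspace : ∫ t in (0:ℝ)..T, ∫ x in a..b,
      (u' t x * partialSnd (partialSnd vstar) t x - vstar t x * partialSnd (partialSnd u') t x)
        = ∫ t in (0:ℝ)..T, vstar t a * φ' t := by
    refine integral_congr fun t ht => ?_
    rw [uIcc_of_le hT.le] at ht
    rw [integral_mul_partialSnd_partialSnd_sub hu' hvstar]
    simp only [partialSnd, hbc1 t ht, hbc2 t ht, hbc3 t ht, hbc4 t ht]
    ring
  calc _ = ∫ t in (0:ℝ)..T, ∫ x in a..b,
        -((partialFst vstar t x * u' t x + vstar t x * partialSnd (partialSnd u') t x)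
          + (u' t x * partialSnd (partialSnd vstar) t x
            - vstar t x * partialSnd (partialSnd u') t x)) :=
        integral_congr_Ioo_of_le hT.le fun t ht => integral_congr_Ioo_of_le hab.le fun x hx => by
          have hadj' : -partialFst vstar t x - partialSnd (partialSnd vstar) t x = u t x :=
            hadj t ht x hx
          rw [← hadj']
          ring
    _ = _ := by
      simp only [intervalIntegral.integral_neg]
      rw [intervalIntegral_intervalIntegral_add_of_continuous hX hY, htime, hspace, zero_add]

/-- Adjoint-based expression for the Gâteaux differential of the energy constraint:
if `u'` solves the perturbation (linearized heat) system with boundary flux `φ'` at `x = a`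
and `v*` solves the backward heat equation forced by the state `u` with homogeneous Neumann
boundary conditions and zero terminal condition, then
`∫₀ᵀ∫ₐᵇ u u' dx dt = −∫₀ᵀ v*(t,a) φ'(t) dt`, identifying the L² representation of the
normal element as `−v*(·,a)` (up to the factor `1/T`). -/
theorem stmt5 (T a b : ℝ) (hT : 0 < T) (hab : a < b)
    (φ' : ℝ → ℝ) (hφ' : Continuous φ')
    (u u' vstar : ℝ → ℝ → ℝ)
    (hu : ContDiff ℝ 2 (Function.uncurry u))
    (hu' : ContDiff ℝ 2 (Function.uncurry u'))
    (hvstar : ContDiff ℝ 2 (Function.uncurry vstar))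
    (hpde : ∀ t ∈ Set.Ioo (0:ℝ) T, ∀ x ∈ Set.Ioo a b,
      deriv (fun s => u' s x) t = deriv (deriv (u' t)) x)
    (hbc1 : ∀ t ∈ Set.Icc (0:ℝ) T, deriv (u' t) a = φ' t)
    (hbc2 : ∀ t ∈ Set.Icc (0:ℝ) T, deriv (u' t) b = 0)
    (hic : ∀ x ∈ Set.Icc a b, u' 0 x = 0)
    (hadj : ∀ t ∈ Set.Ioo (0:ℝ) T, ∀ x ∈ Set.Ioo a b,
      -(deriv (fun s => vstar s x) t) - deriv (deriv (vstar t)) x = u t x)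
    (hbc3 : ∀ t ∈ Set.Icc (0:ℝ) T, deriv (vstar t) a = 0)
    (hbc4 : ∀ t ∈ Set.Icc (0:ℝ) T, deriv (vstar t) b = 0)
    (htc : ∀ x ∈ Set.Icc a b, vstar T x = 0) :
    ∫ t in (0:ℝ)..T, ∫ x in a..b, u t x * u' t x
      = -∫ t in (0:ℝ)..T, vstar t a * φ' t :=
  stmt5_general T a b hT hab φ' u u' vstar hu' hvstar hpde hbc1 hbc2 hic hadj hbc3 hbc4 htc
end
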